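/- arXiv:0901.4725 — 5 statements merged into one kernel-verified Lean document; each statement's English description precedes it below -/
import Mathlib

section
/- For each l = 1, 2, 3, the maps Ψ_l form a one-parameter flow: for all s, t ∈ ℝ and all (q, π) ∈ ℝ⁴ × ℝ⁴, Ψ_l(s; Ψ_l(t; q, π)) = Ψ_l(s + t; q, π). -/
noncomputable section
open Matrix
open scoped InnerProductSpace BigOperators

/-- `S₁ q = (−q₁, q₀, q₃, −q₂)`. -/
def S1 : Matrix (Fin 4) (Fin 4) ℝ := !![0,-1,0,0; 1,0,0,0; 0,0,0,1; 0,0,-1,0]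
/-- `S₂ q = (−q₂, −q₃, q₀, q₁)`. -/
def S2 : Matrix (Fin 4) (Fin 4) ℝ := !![0,0,-1,0; 0,0,0,-1; 1,0,0,0; 0,1,0,0]
/-- `S₃ q = (−q₃, q₂, −q₁, q₀)`. -/
def S3 : Matrix (Fin 4) (Fin 4) ℝ := !![0,0,0,-1; 0,0,1,0; 0,-1,0,0; 1,0,0,0]
/-- The family `S l`, `l = 1, 2, 3` (0-indexed). -/
def S : Fin 3 → Matrix (Fin 4) (Fin 4) ℝ := ![S1, S2, S3]

/-- The rotational kinetic-energy term `Vₗ(q, π) = (1/(8 Iₗ)) (πᵀ Sₗ q)²`. -/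
def V (I : Fin 3 → ℝ) (l : Fin 3) (q π : Fin 4 → ℝ) : ℝ :=
  (1 / (8 * I l)) * (π ⬝ᵥ (S l *ᵥ q)) ^ 2

/-- `χₗ = (1/(4 Iₗ)) (πᵀ Sₗ q)`. -/
def chi (I : Fin 3 → ℝ) (l : Fin 3) (q π : Fin 4 → ℝ) : ℝ :=
  (1 / (4 * I l)) * (π ⬝ᵥ (S l *ᵥ q))

/-- The map `Ψₗ(t; q, π) = (cos(χₗ t) q + sin(χₗ t) Sₗ q, cos(χₗ t) π + sin(χₗ t) Sₗ π)`. -/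
def Psi (I : Fin 3 → ℝ) (l : Fin 3) (t : ℝ) (x : (Fin 4 → ℝ) × (Fin 4 → ℝ)) :
    (Fin 4 → ℝ) × (Fin 4 → ℝ) :=
  (Real.cos (chi I l x.1 x.2 * t) • x.1 + Real.sin (chi I l x.1 x.2 * t) • (S l *ᵥ x.1),
   Real.cos (chi I l x.1 x.2 * t) • x.2 + Real.sin (chi I l x.1 x.2 * t) • (S l *ᵥ x.2))

lemma S_sq (l : Fin 3) (v : Fin 4 → ℝ) : S l *ᵥ (S l *ᵥ v) = -v := by
  fin_cases l <;>
  · funext i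
    fin_cases i <;>
      · simp [S, S1, S2, S3, Matrix.mulVec, dotProduct, Fin.sum_univ_four,
          Matrix.vecHead, Matrix.vecTail]
        try ring

lemma S_dot (l : Fin 3) (p v : Fin 4 → ℝ) : (S l *ᵥ p) ⬝ᵥ (S l *ᵥ v) = p ⬝ᵥ v := by
  fin_cases l <;>
  · simp [S, S1, S2, S3, Matrix.mulVec, dotProduct, Fin.sum_univ_four,
      Matrix.vecHead, Matrix.vecTail]
    ring

lemma S_skew (l : Fin 3) (p v : Fin 4 → ℝ) : (S l *ᵥ p) ⬝ᵥ v = -(p ⬝ᵥ (S l *ᵥ v)) := by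
  fin_cases l <;>
  · simp [S, S1, S2, S3, Matrix.mulVec, dotProduct, Fin.sum_univ_four,
      Matrix.vecHead, Matrix.vecTail]
    ring

lemma chi_inv (I : Fin 3 → ℝ) (l : Fin 3) (t : ℝ) (q π : Fin 4 → ℝ) :
    chi I l (Psi I l t (q, π)).1 (Psi I l t (q, π)).2 = chi I l q π := by
  have h := Real.sin_sq_add_cos_sq (chi I l q π * t)
  simp only [chi, Psi, Matrix.mulVec_add, Matrix.mulVec_smul, add_dotProduct,
    dotProduct_add, smul_dotProduct, dotProduct_smul, S_sq, S_skew, smul_eq_mul,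
    dotProduct_neg] at h ⊢
  linear_combination (1 / (4 * I l) * (π ⬝ᵥ (S l *ᵥ q))) * h


/-- The maps `Ψₗ` form a one-parameter flow. -/
theorem stmt4 (I : Fin 3 → ℝ) (hI : ∀ l, 0 < I l) (l : Fin 3) (s t : ℝ)
    (q π : Fin 4 → ℝ) :
    Psi I l s (Psi I l t (q, π)) = Psi I l (s + t) (q, π) := by
  have hc := chi_inv I l t q π
  set c := chi I l q π with hcdef
  have key : ∀ v : Fin 4 → ℝ,
      Real.cos (c * s) • (Real.cos (c * t) • v + Real.sin (c * t) • (S l *ᵥ v))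
        + Real.sin (c * s) • (S l *ᵥ (Real.cos (c * t) • v + Real.sin (c * t) • (S l *ᵥ v)))
      = Real.cos (c * (s + t)) • v + Real.sin (c * (s + t)) • (S l *ᵥ v) := by
    intro v
    rw [mul_add, Real.cos_add, Real.sin_add, Matrix.mulVec_add, Matrix.mulVec_smul,
      Matrix.mulVec_smul, S_sq]
    funext i
    simp only [Pi.add_apply, Pi.smul_apply, Pi.neg_apply, smul_eq_mul, Pi.sub_apply]
    ring
  simp only [Psi] at hc ⊢
  rw [hc]
  exact Prod.ext (key q) (key π)
end
end

section
/- For each l = 1, 2, 3 and each fixed (q, π) ∈ ℝ⁴ × ℝ⁴, the curve t ↦ (Q(t), Π(t)) := Ψ_l(t; q, π) is the exact solution of the Hamiltonian system with Hamiltonian V_l: it satisfies Q(0) = q, Π(0) = π, and for all t ∈ ℝ, Q′(t) = ∇_π V_l(Q(t), Π(t)) = (1/(4·I_l))·(Π(t)ᵀ S_l Q(t))·S_l Q(t) and Π′(t) = −∇_q V_l(Q(t), Π(t)) = (1/(4·I_l))·(Π(t)ᵀ S_l Q(t))·S_l Π(t). -/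
noncomputable section
open Matrix
open scoped InnerProductSpace BigOperators

/-! Each `Sₗ` is a skew-symmetric complex structure (`Sₗ² = -1`, `Sₗᵀ = -Sₗ`), so `Ψₗ(t)` rotates
`q` and `π` simultaneously by the angle `χₗ t` in the planes spanned by `v, Sₗ v`. The pairing
`πᵀ Sₗ q` is invariant under this rotation, so the coefficient `(1/(4 Iₗ)) Πᵀ Sₗ Q` stays equal
to `χₗ` along the curve, and the derivative of the rotation `cos(χ t) v + sin(χ t) Sₗ v` is
exactly `χ Sₗ` applied to it. -/

def rot {n : Type*} [Fintype n] (A : Matrix n n ℝ) (θ : ℝ) (v : n → ℝ) : n → ℝ :=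
  Real.cos θ • v + Real.sin θ • (A *ᵥ v)

section ComplexStructure

variable {n : Type*} [Fintype n] {A : Matrix n n ℝ}

lemma mulVec_dotProduct_of_transpose_eq_neg (hAT : Aᵀ = -A) (v w : n → ℝ) :
    (A *ᵥ v) ⬝ᵥ w = -(v ⬝ᵥ (A *ᵥ w)) := by
  rw [← vecMul_transpose, ← dotProduct_mulVec, hAT, neg_mulVec, dotProduct_neg]

variable [DecidableEq n]

lemma mulVec_mulVec_of_mul_self_eq_neg_one (hA : A * A = -1) (v : n → ℝ) :
    A *ᵥ (A *ᵥ v) = -v := by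
  rw [mulVec_mulVec, hA, neg_mulVec, one_mulVec]

lemma mulVec_rot (hA : A * A = -1) (θ : ℝ) (v : n → ℝ) :
    A *ᵥ rot A θ v = Real.cos θ • (A *ᵥ v) - Real.sin θ • v := by
  rw [rot, mulVec_add, mulVec_smul, mulVec_smul, mulVec_mulVec_of_mul_self_eq_neg_one hA,
    smul_neg, sub_eq_add_neg]

lemma hasDerivAt_rot (hA : A * A = -1) (c t : ℝ) (v : n → ℝ) :
    HasDerivAt (fun s => rot A (c * s) v) (c • (A *ᵥ rot A (c * t) v)) t := by
  have hlin : HasDerivAt (fun s : ℝ => c * s) c t := by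
    simpa using (hasDerivAt_id t).const_mul c
  have h := (((Real.hasDerivAt_cos (c * t)).comp t hlin).smul_const v).add
    (((Real.hasDerivAt_sin (c * t)).comp t hlin).smul_const (A *ᵥ v))
  refine h.congr_deriv ?_
  rw [mulVec_rot hA]
  module

lemma rot_dotProduct_mulVec_rot (hA : A * A = -1) (hAT : Aᵀ = -A) (θ : ℝ) (p q : n → ℝ) :
    rot A θ p ⬝ᵥ (A *ᵥ rot A θ q) = p ⬝ᵥ (A *ᵥ q) := by
  have horth : (A *ᵥ p) ⬝ᵥ (A *ᵥ q) = p ⬝ᵥ q := by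
    rw [mulVec_dotProduct_of_transpose_eq_neg hAT, mulVec_mulVec_of_mul_self_eq_neg_one hA,
      dotProduct_neg, neg_neg]
  rw [mulVec_rot hA, rot]
  simp only [dotProduct_sub, add_dotProduct, smul_dotProduct, dotProduct_smul, smul_eq_mul,
    horth, mulVec_dotProduct_of_transpose_eq_neg hAT p q]
  linear_combination (p ⬝ᵥ (A *ᵥ q)) * Real.sin_sq_add_cos_sq θ

end ComplexStructure

lemma S_mul_self (l : Fin 3) : S l * S l = -1 := by
  fin_cases l <;> ext i j <;> fin_cases i <;> fin_cases j <;>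
    simp [S, S1, S2, S3, mul_apply, Fin.sum_univ_four]

lemma S_transpose (l : Fin 3) : (S l)ᵀ = -S l := by
  fin_cases l <;> ext i j <;> fin_cases i <;> fin_cases j <;> simp [S, S1, S2, S3]

lemma Psi_eq_rot (I : Fin 3 → ℝ) (l : Fin 3) (t : ℝ) (q π : Fin 4 → ℝ) :
    Psi I l t (q, π) = (rot (S l) (chi I l q π * t) q, rot (S l) (chi I l q π * t) π) := rfl

theorem stmt6_general (I : Fin 3 → ℝ) (l : Fin 3) (q π : Fin 4 → ℝ) :
    Psi I l 0 (q, π) = (q, π) ∧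
    ∀ t : ℝ, HasDerivAt (fun s => Psi I l s (q, π))
      (((1 / (4 * I l)) * ((Psi I l t (q, π)).2 ⬝ᵥ (S l *ᵥ (Psi I l t (q, π)).1))) •
        (S l *ᵥ (Psi I l t (q, π)).1),
       ((1 / (4 * I l)) * ((Psi I l t (q, π)).2 ⬝ᵥ (S l *ᵥ (Psi I l t (q, π)).1))) •
        (S l *ᵥ (Psi I l t (q, π)).2)) t := by
  refine ⟨by simp [Psi], fun t => ?_⟩
  have hcoef : (1 / (4 * I l)) * ((Psi I l t (q, π)).2 ⬝ᵥ (S l *ᵥ (Psi I l t (q, π)).1)) =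
      chi I l q π := by
    rw [Psi_eq_rot, rot_dotProduct_mulVec_rot (S_mul_self l) (S_transpose l), chi]
  rw [hcoef, Psi_eq_rot]
  exact (hasDerivAt_rot (S_mul_self l) _ t q).prodMk (hasDerivAt_rot (S_mul_self l) _ t π)

/-- `t ↦ Ψₗ(t; q, π)` is the exact flow of the Hamiltonian system with Hamiltonian `Vₗ`. -/
theorem stmt6 (I : Fin 3 → ℝ) (hI : ∀ l, 0 < I l) (l : Fin 3) (q π : Fin 4 → ℝ) :
    Psi I l 0 (q, π) = (q, π) ∧
    ∀ t : ℝ, HasDerivAt (fun s => Psi I l s (q, π))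
      (((1 / (4 * I l)) * ((Psi I l t (q, π)).2 ⬝ᵥ (S l *ᵥ (Psi I l t (q, π)).1))) •
        (S l *ᵥ (Psi I l t (q, π)).1),
       ((1 / (4 * I l)) * ((Psi I l t (q, π)).2 ⬝ᵥ (S l *ᵥ (Psi I l t (q, π)).1))) •
        (S l *ᵥ (Psi I l t (q, π)).2)) t :=
  stmt6_general I l q π
end
end

section
/- For each l = 1, 2, 3 and each t ∈ ℝ, the map (q, π) ↦ Ψ_l(t; q, π) from ℝ⁴ × ℝ⁴ ≅ ℝ⁸ to itself is smooth and symplectic: at every point its Fréchet derivative, viewed as an 8×8 real matrix D, satisfies Dᵀ Ω D = Ω, where Ω is the canonical symplectic matrix with 4×4 blocks Ω = [[0, I₄], [−I₄, 0]]. -/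
noncomputable section
open Matrix
open scoped InnerProductSpace BigOperators

namespace Aux

open ContinuousLinearMap

abbrev E := (Fin 4 → ℝ) × (Fin 4 → ℝ)

def LL (A : Matrix (Fin 4) (Fin 4) ℝ) (x : E) : E →L[ℝ] ℝ :=
  LinearMap.toContinuousLinearMap
  { toFun := fun u => u.2 ⬝ᵥ (A *ᵥ x.1) + x.2 ⬝ᵥ (A *ᵥ u.1)
    map_add' := by
      intro a b
      simp [add_dotProduct, Matrix.mulVec_add, dotProduct_add]
      ring
    map_smul' := by
      intro c a
      simp [smul_dotProduct, Matrix.mulVec_smul, dotProduct_smul, smul_eq_mul]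
      ring }

@[simp] lemma LL_apply (A : Matrix (Fin 4) (Fin 4) ℝ) (x u : E) :
    LL A x u = u.2 ⬝ᵥ (A *ᵥ x.1) + x.2 ⬝ᵥ (A *ᵥ u.1) := rfl

def MC (A : Matrix (Fin 4) (Fin 4) ℝ) : E →L[ℝ] (Fin 4 → ℝ) :=
  (LinearMap.toContinuousLinearMap A.mulVecLin).comp (fst ℝ _ _)

@[simp] lemma MC_apply (A : Matrix (Fin 4) (Fin 4) ℝ) (x : E) : MC A x = A *ᵥ x.1 := rfl

def MC2 (A : Matrix (Fin 4) (Fin 4) ℝ) : E →L[ℝ] (Fin 4 → ℝ) :=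
  (LinearMap.toContinuousLinearMap A.mulVecLin).comp (snd ℝ _ _)

@[simp] lemma MC2_apply (A : Matrix (Fin 4) (Fin 4) ℝ) (x : E) : MC2 A x = A *ᵥ x.2 := rfl

lemma hasFDerivAt_dot (A : Matrix (Fin 4) (Fin 4) ℝ) (x : E) :
    HasFDerivAt (fun x : E => x.2 ⬝ᵥ (A *ᵥ x.1)) (LL A x) x := by
  have h2 : ∀ i : Fin 4, HasFDerivAt (fun x : E => x.2 i)
      ((proj i).comp (snd ℝ (Fin 4 → ℝ) (Fin 4 → ℝ))) x :=
    fun i => ((proj i).comp (snd ℝ (Fin 4 → ℝ) (Fin 4 → ℝ))).hasFDerivAt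
  have h1 : ∀ i : Fin 4, HasFDerivAt (fun x : E => (A *ᵥ x.1) i)
      ((proj i).comp (MC A)) x := fun i => ((proj i).comp (MC A)).hasFDerivAt
  have h : HasFDerivAt (fun x : E => ∑ i, x.2 i * (A *ᵥ x.1) i)
      (∑ i, (x.2 i • ((proj i).comp (MC A)) +
        (A *ᵥ x.1) i • ((proj i).comp (snd ℝ (Fin 4 → ℝ) (Fin 4 → ℝ))))) x :=
    HasFDerivAt.fun_sum fun i _ => (h2 i).mul (h1 i)
  convert h using 1
  · rfl
  · refine ContinuousLinearMap.ext fun u => ?_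
    simp [dotProduct, Fin.sum_univ_four, Matrix.mulVec]
    ring

lemma hasFDerivAt_chi (I : Fin 3 → ℝ) (l : Fin 3) (t : ℝ) (x : E) :
    HasFDerivAt (fun x : E => chi I l x.1 x.2 * t)
      (((1 / (4 * I l)) * t) • LL (S l) x) x := by
  have h := ((hasFDerivAt_dot (S l) x).const_mul (1 / (4 * I l))).mul_const t
  refine h.congr_fderiv ?_
  · refine ContinuousLinearMap.ext fun u => ?_
    simp
    ring

lemma hasFDerivAt_Psi (I : Fin 3 → ℝ) (l : Fin 3) (t : ℝ) (x : E) :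
    HasFDerivAt (Psi I l t)
      (((Real.cos (chi I l x.1 x.2 * t) • (fst ℝ (Fin 4 → ℝ) (Fin 4 → ℝ)) +
          ((-Real.sin (chi I l x.1 x.2 * t)) • (((1 / (4 * I l)) * t) • LL (S l) x)).smulRight x.1) +
        (Real.sin (chi I l x.1 x.2 * t) • (MC (S l)) +
          ((Real.cos (chi I l x.1 x.2 * t)) • (((1 / (4 * I l)) * t) • LL (S l) x)).smulRight (S l *ᵥ x.1))).prod
       ((Real.cos (chi I l x.1 x.2 * t) • (snd ℝ (Fin 4 → ℝ) (Fin 4 → ℝ)) +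
          ((-Real.sin (chi I l x.1 x.2 * t)) • (((1 / (4 * I l)) * t) • LL (S l) x)).smulRight x.2) +
        (Real.sin (chi I l x.1 x.2 * t) • (MC2 (S l)) +
          ((Real.cos (chi I l x.1 x.2 * t)) • (((1 / (4 * I l)) * t) • LL (S l) x)).smulRight (S l *ᵥ x.2)))) x := by
  have hθ := hasFDerivAt_chi I l t x
  have hc := hθ.cos
  have hs := hθ.sin
  have hfst : HasFDerivAt (fun x : E => x.1) (fst ℝ (Fin 4 → ℝ) (Fin 4 → ℝ)) x :=
    (fst ℝ (Fin 4 → ℝ) (Fin 4 → ℝ)).hasFDerivAt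
  have hsnd : HasFDerivAt (fun x : E => x.2) (snd ℝ (Fin 4 → ℝ) (Fin 4 → ℝ)) x :=
    (snd ℝ (Fin 4 → ℝ) (Fin 4 → ℝ)).hasFDerivAt
  have hm : HasFDerivAt (fun x : E => S l *ᵥ x.1) (MC (S l)) x := (MC (S l)).hasFDerivAt
  have hm2 : HasFDerivAt (fun x : E => S l *ᵥ x.2) (MC2 (S l)) x := (MC2 (S l)).hasFDerivAt
  exact ((hc.smul hfst).add (hs.smul hm)).prodMk ((hc.smul hsnd).add (hs.smul hm2))

lemma key (M : Matrix (Fin 4) (Fin 4) ℝ)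
    (hSS : ∀ a b : Fin 4 → ℝ, (M *ᵥ a) ⬝ᵥ (M *ᵥ b) = a ⬝ᵥ b)
    (hsk : ∀ a b : Fin 4 → ℝ, (M *ᵥ a) ⬝ᵥ b = -(a ⬝ᵥ (M *ᵥ b)))
    (c s K : ℝ) (hcs : s ^ 2 + c ^ 2 = 1)
    (q p u1 u2 v1 v2 : Fin 4 → ℝ) :
    (c • u1 + (-s * (K * (u2 ⬝ᵥ M *ᵥ q + p ⬝ᵥ M *ᵥ u1))) • q +
        (s • M *ᵥ u1 + (c * (K * (u2 ⬝ᵥ M *ᵥ q + p ⬝ᵥ M *ᵥ u1))) • M *ᵥ q)) ⬝ᵥ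
      (c • v2 + (-s * (K * (v2 ⬝ᵥ M *ᵥ q + p ⬝ᵥ M *ᵥ v1))) • p +
        (s • M *ᵥ v2 + (c * (K * (v2 ⬝ᵥ M *ᵥ q + p ⬝ᵥ M *ᵥ v1))) • M *ᵥ p)) -
    (c • u2 + (-s * (K * (u2 ⬝ᵥ M *ᵥ q + p ⬝ᵥ M *ᵥ u1))) • p +
        (s • M *ᵥ u2 + (c * (K * (u2 ⬝ᵥ M *ᵥ q + p ⬝ᵥ M *ᵥ u1))) • M *ᵥ p)) ⬝ᵥ
      (c • v1 + (-s * (K * (v2 ⬝ᵥ M *ᵥ q + p ⬝ᵥ M *ᵥ v1))) • q +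
        (s • M *ᵥ v1 + (c * (K * (v2 ⬝ᵥ M *ᵥ q + p ⬝ᵥ M *ᵥ v1))) • M *ᵥ q)) =
    u1 ⬝ᵥ v2 - u2 ⬝ᵥ v1 := by
  have hMM : ∀ a b : Fin 4 → ℝ, a ⬝ᵥ (M *ᵥ (M *ᵥ b)) = -(a ⬝ᵥ b) := by
    intro a b
    have h1 := hsk a (M *ᵥ b)
    have h2 := hSS a b
    linarith
  have e1 : p ⬝ᵥ (M *ᵥ u1) = -(u1 ⬝ᵥ (M *ᵥ p)) := by
    rw [dotProduct_comm]; exact hsk u1 p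
  have e2 : p ⬝ᵥ (M *ᵥ v1) = -(v1 ⬝ᵥ (M *ᵥ p)) := by
    rw [dotProduct_comm]; exact hsk v1 p
  have e3 : q ⬝ᵥ (M *ᵥ v2) = -(v2 ⬝ᵥ (M *ᵥ q)) := by
    rw [dotProduct_comm]; exact hsk v2 q
  have e4 : q ⬝ᵥ (M *ᵥ u2) = -(u2 ⬝ᵥ (M *ᵥ q)) := by
    rw [dotProduct_comm]; exact hsk u2 q
  have e5 : q ⬝ᵥ (M *ᵥ v1) = -(v1 ⬝ᵥ (M *ᵥ q)) := by
    rw [dotProduct_comm]; exact hsk v1 q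
  have e6 : p ⬝ᵥ (M *ᵥ v2) = -(v2 ⬝ᵥ (M *ᵥ p)) := by
    rw [dotProduct_comm]; exact hsk v2 p
  have e7 : p ⬝ᵥ q = q ⬝ᵥ p := dotProduct_comm p q
  have e8 : q ⬝ᵥ v2 = v2 ⬝ᵥ q := dotProduct_comm q v2
  have e9 : q ⬝ᵥ v1 = v1 ⬝ᵥ q := dotProduct_comm q v1
  have e10 : p ⬝ᵥ v1 = v1 ⬝ᵥ p := dotProduct_comm p v1
  have e11 : p ⬝ᵥ v2 = v2 ⬝ᵥ p := dotProduct_comm p v2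
  have e12 : u1 ⬝ᵥ p = p ⬝ᵥ u1 := dotProduct_comm u1 p
  have e13 : u2 ⬝ᵥ q = q ⬝ᵥ u2 := dotProduct_comm u2 q
  simp only [add_dotProduct, dotProduct_add, smul_dotProduct,
    dotProduct_smul, smul_eq_mul, hSS, hsk, hMM, e1, e2, e3, e4, e5, e6, e7, e8,
    e9, e10, e11, e12, e13]
  linear_combination (u1 ⬝ᵥ v2 - u2 ⬝ᵥ v1) * hcs

lemma S_SS (l : Fin 3) (a b : Fin 4 → ℝ) : (S l *ᵥ a) ⬝ᵥ (S l *ᵥ b) = a ⬝ᵥ b := by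
  fin_cases l <;>
    simp [S, S1, S2, S3, Matrix.mulVec, dotProduct, Fin.sum_univ_four,
      Matrix.cons_val_zero, Matrix.cons_val_one, Matrix.head_cons, Matrix.cons_val_two,
      Matrix.cons_val_three, Matrix.vecTail, Matrix.vecHead, Matrix.cons_val',
      Matrix.empty_val', Matrix.cons_val_fin_one] <;> ring

lemma S_sk (l : Fin 3) (a b : Fin 4 → ℝ) : (S l *ᵥ a) ⬝ᵥ b = -(a ⬝ᵥ (S l *ᵥ b)) := by
  fin_cases l <;>
    simp [S, S1, S2, S3, Matrix.mulVec, dotProduct, Fin.sum_univ_four,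
      Matrix.cons_val_zero, Matrix.cons_val_one, Matrix.head_cons, Matrix.cons_val_two,
      Matrix.cons_val_three, Matrix.vecTail, Matrix.vecHead, Matrix.cons_val',
      Matrix.empty_val', Matrix.cons_val_fin_one] <;> ring

end Aux


/-- For each `l` and `t`, the map `(q, π) ↦ Ψₗ(t; q, π)` on `ℝ⁴ × ℝ⁴ ≅ ℝ⁸` is smooth and
symplectic: its Fréchet derivative `D` satisfies `Dᵀ Ω D = Ω`, expressed here via the
canonical symplectic bilinear form `ω(u, v) = u₁ᵀ v₂ − u₂ᵀ v₁` (i.e. `uᵀ Ω v` with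
`Ω = [[0, I₄], [−I₄, 0]]`). -/


theorem stmt7 (I : Fin 3 → ℝ) (hI : ∀ l, 0 < I l) (l : Fin 3) (t : ℝ) :
    ContDiff ℝ (⊤ : ℕ∞) (Psi I l t) ∧
    ∀ x u v : (Fin 4 → ℝ) × (Fin 4 → ℝ),
      (fderiv ℝ (Psi I l t) x u).1 ⬝ᵥ (fderiv ℝ (Psi I l t) x v).2 -
        (fderiv ℝ (Psi I l t) x u).2 ⬝ᵥ (fderiv ℝ (Psi I l t) x v).1 =
      u.1 ⬝ᵥ v.2 - u.2 ⬝ᵥ v.1 := by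
  open Aux ContinuousLinearMap in
  constructor
  · have hdot : ContDiff ℝ (⊤ : ℕ∞) (fun x : Aux.E => x.2 ⬝ᵥ (S l *ᵥ x.1)) := by
      simp only [dotProduct, Matrix.mulVec, Fin.sum_univ_four]
      fun_prop
    have hchi : ContDiff ℝ (⊤ : ℕ∞) (fun x : Aux.E => chi I l x.1 x.2 * t) := by
      simp only [chi]
      exact (contDiff_const.mul hdot).mul contDiff_const
    have hc := Real.contDiff_cos.comp hchi
    have hs := Real.contDiff_sin.comp hchi
    exact ((hc.smul contDiff_fst).add (hs.smul (MC (S l)).contDiff)).prodMk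
      ((hc.smul contDiff_snd).add (hs.smul (MC2 (S l)).contDiff))
  · intro x u v
    rw [(hasFDerivAt_Psi I l t x).fderiv]
    set c := Real.cos (chi I l x.1 x.2 * t) with hcdef
    set s := Real.sin (chi I l x.1 x.2 * t) with hsdef
    have hcs : s ^ 2 + c ^ 2 = 1 := Real.sin_sq_add_cos_sq _
    simp only [prod_apply, ContinuousLinearMap.add_apply, ContinuousLinearMap.smul_apply,
      smulRight_apply, coe_fst', coe_snd', coe_smul', Pi.smul_apply, LL_apply, MC_apply,
      MC2_apply, coe_comp', Function.comp, smul_eq_mul]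
    exact key (S l) (S_SS l) (S_sk l) c s (1 / (4 * I l) * t) hcs x.1 x.2 u.1 u.2 v.1 v.2
end
end

section
/- For every q ∈ ℝ⁴, the matrix J(q) satisfies J(q)·q = 0, and for each l = 1, 2, 3, J(q)·(S_l q) = λ_l·‖q‖²·(S_l q), where λ_l = (1/I_l) / (Σ_{m=1}^{3} 1/I_m). In particular, if ‖q‖ = 1, then J(q) has the eigenvalues 0, λ₁, λ₂, λ₃ with corresponding orthonormal eigenvectors q, S₁q, S₂q, S₃q. -/
noncomputable section
open Matrix
open scoped InnerProductSpace BigOperators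

/-- `J(q) = (Σₗ (1/Iₗ) (Sₗ q)(Sₗ q)ᵀ) / (Σₗ 1/Iₗ)`. -/
def Jmat (I : Fin 3 → ℝ) (q : Fin 4 → ℝ) : Matrix (Fin 4) (Fin 4) ℝ :=
  (∑ l : Fin 3, 1 / I l)⁻¹ • ∑ l : Fin 3, (1 / I l) • vecMulVec (S l *ᵥ q) (S l *ᵥ q)

/-- `M = 4 / (Σₗ 1/Iₗ)`. -/
def Mc (I : Fin 3 → ℝ) : ℝ := 4 / ∑ l : Fin 3, 1 / I l

/-- `λₗ = (1/Iₗ) / (Σₘ 1/Iₘ)`. -/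
def lam (I : Fin 3 → ℝ) (l : Fin 3) : ℝ := (1 / I l) / ∑ m : Fin 3, 1 / I m

/-!
Writing `q` as a quaternion, `Sₗ q = q · eₗ` for the units `e₁, e₂, e₃ = i, j, k`. Right
multiplication by a quaternion scales lengths by its norm, so `q, S₁q, S₂q, S₃q` are pairwise
orthogonal of length `‖q‖`. Applied to `x`, the weighted sum of rank-one matrices `J(q)` gives
`Σₗ λₗ ⟨Sₗ q, x⟩ Sₗ q`; by orthogonality only the `l`-th term survives for `x = Sₗ q`, and none
for `x = q`.
-/

def quatFrame : Fin 4 → Matrix (Fin 4) (Fin 4) ℝ := Fin.cons 1 S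

theorem quatFrame_mulVec_dotProduct_quatFrame_mulVec (q : Fin 4 → ℝ) (i j : Fin 4) :
    (quatFrame i *ᵥ q) ⬝ᵥ (quatFrame j *ᵥ q) = if i = j then q ⬝ᵥ q else 0 := by
  fin_cases i <;> fin_cases j <;>
    simp [quatFrame, S, S1, S2, S3, mulVec, dotProduct, Fin.sum_univ_four] <;> ring

theorem Matrix.sum_smul_vecMulVec_mulVec {ι m n α : Type*} [CommSemiring α] [Fintype n]
    (s : Finset ι) (w : ι → α) (u : ι → m → α) (v : ι → n → α) (x : n → α) :
    (∑ i ∈ s, w i • vecMulVec (u i) (v i)) *ᵥ x = ∑ i ∈ s, (w i * (v i ⬝ᵥ x)) • u i := by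
  simp only [sum_mulVec, smul_mulVec, vecMulVec_mulVec, op_smul_eq_smul, smul_smul]

theorem Jmat_mulVec (I : Fin 3 → ℝ) (q x : Fin 4 → ℝ) :
    Jmat I q *ᵥ x = ∑ l, (lam I l * ((S l *ᵥ q) ⬝ᵥ x)) • (S l *ᵥ q) := by
  simp only [Jmat, sum_smul_vecMulVec_mulVec, Finset.smul_sum, smul_smul, lam]
  congr! 2
  ring

theorem S_mulVec_dotProduct_quatFrame_mulVec (q : Fin 4 → ℝ) (l : Fin 3) (j : Fin 4) :
    (S l *ᵥ q) ⬝ᵥ (quatFrame j *ᵥ q) = if l.succ = j then q ⬝ᵥ q else 0 :=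
  quatFrame_mulVec_dotProduct_quatFrame_mulVec q l.succ j

theorem Jmat_mulVec_self (I : Fin 3 → ℝ) (q : Fin 4 → ℝ) : Jmat I q *ᵥ q = 0 := by
  rw [Jmat_mulVec]
  refine Finset.sum_eq_zero fun l _ => ?_
  have h := S_mulVec_dotProduct_quatFrame_mulVec q l 0
  rw [quatFrame, Fin.cons_zero, one_mulVec, if_neg (Fin.succ_ne_zero l)] at h
  rw [h, mul_zero, zero_smul]

theorem Jmat_mulVec_S_mulVec (I : Fin 3 → ℝ) (q : Fin 4 → ℝ) (l : Fin 3) :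
    Jmat I q *ᵥ (S l *ᵥ q) = (lam I l * (q ⬝ᵥ q)) • (S l *ᵥ q) := by
  have := fun m => S_mulVec_dotProduct_quatFrame_mulVec q m l.succ
  simp only [quatFrame, Fin.cons_succ, Fin.succ_inj] at this
  simp only [Jmat_mulVec, this, mul_ite, mul_zero, ite_smul, zero_smul, Finset.sum_ite_eq',
    Finset.mem_univ, if_true]

theorem orthonormal_quatFrame_mulVec {q : Fin 4 → ℝ} (hq : q ⬝ᵥ q = 1) :
    Orthonormal ℝ fun i => WithLp.toLp 2 (quatFrame i *ᵥ q) := by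
  rw [orthonormal_iff_ite]
  intro i j
  rw [EuclideanSpace.inner_toLp_toLp, star_trivial,
    quatFrame_mulVec_dotProduct_quatFrame_mulVec, hq]
  simp [eq_comm]

theorem stmt8_general (I : Fin 3 → ℝ) (q : EuclideanSpace ℝ (Fin 4)) :
    Jmat I q *ᵥ q = 0 ∧
    (∀ l : Fin 3, Jmat I q *ᵥ (S l *ᵥ q) = (lam I l * ‖q‖ ^ 2) • (S l *ᵥ q)) ∧
    (‖q‖ = 1 →
      Orthonormal ℝ (![q, WithLp.toLp 2 (S1 *ᵥ q), WithLp.toLp 2 (S2 *ᵥ q), WithLp.toLp 2 (S3 *ᵥ q)] : Fin 4 → EuclideanSpace ℝ (Fin 4)) ∧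
      ∀ i : Fin 4,
        Jmat I q *ᵥ ((![q, WithLp.toLp 2 (S1 *ᵥ q), WithLp.toLp 2 (S2 *ᵥ q), WithLp.toLp 2 (S3 *ᵥ q)] : Fin 4 → EuclideanSpace ℝ (Fin 4)) i) =
          ![0, lam I 0, lam I 1, lam I 2] i •
            ((![q, WithLp.toLp 2 (S1 *ᵥ q), WithLp.toLp 2 (S2 *ᵥ q), WithLp.toLp 2 (S3 *ᵥ q)] : Fin 4 → EuclideanSpace ℝ (Fin 4)) i)) := by
  have hnorm : ‖q‖ ^ 2 = q.ofLp ⬝ᵥ q.ofLp := by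
    rw [← real_inner_self_eq_norm_sq, EuclideanSpace.inner_eq_star_dotProduct, star_trivial]
  have hS (l : Fin 3) : Jmat I q *ᵥ (S l *ᵥ q) = (lam I l * ‖q‖ ^ 2) • (S l *ᵥ q) :=
    hnorm ▸ Jmat_mulVec_S_mulVec I q l
  have hfamily : (![q, WithLp.toLp 2 (S1 *ᵥ q), WithLp.toLp 2 (S2 *ᵥ q), WithLp.toLp 2 (S3 *ᵥ q)] :
      Fin 4 → EuclideanSpace ℝ (Fin 4)) = fun i => WithLp.toLp 2 (quatFrame i *ᵥ q) := by
    ext i : 1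
    fin_cases i <;> simp [quatFrame, S]
  refine ⟨Jmat_mulVec_self I q, hS, fun hq => ⟨?_, fun i => ?_⟩⟩
  · rw [hfamily]
    exact orthonormal_quatFrame_mulVec (by rw [← hnorm, hq, one_pow])
  · fin_cases i
    · simpa using Jmat_mulVec_self I q
    · simpa [S, hq] using hS 0
    · simpa [S, hq] using hS 1
    · simpa [S, hq] using hS 2

/-- `J(q) q = 0` and `J(q) (Sₗ q) = λₗ ‖q‖² (Sₗ q)`; if `‖q‖ = 1` then `J(q)` has
eigenvalues `0, λ₁, λ₂, λ₃` with orthonormal eigenvectors `q, S₁q, S₂q, S₃q`. -/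
theorem stmt8 (I : Fin 3 → ℝ) (hI : ∀ l, 0 < I l) (q : EuclideanSpace ℝ (Fin 4)) :
    Jmat I q *ᵥ q = 0 ∧
    (∀ l : Fin 3, Jmat I q *ᵥ (S l *ᵥ q) = (lam I l * ‖q‖ ^ 2) • (S l *ᵥ q)) ∧
    (‖q‖ = 1 →
      Orthonormal ℝ (![q, WithLp.toLp 2 (S1 *ᵥ q), WithLp.toLp 2 (S2 *ᵥ q), WithLp.toLp 2 (S3 *ᵥ q)] : Fin 4 → EuclideanSpace ℝ (Fin 4)) ∧
      ∀ i : Fin 4,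
        Jmat I q *ᵥ ((![q, WithLp.toLp 2 (S1 *ᵥ q), WithLp.toLp 2 (S2 *ᵥ q), WithLp.toLp 2 (S3 *ᵥ q)] : Fin 4 → EuclideanSpace ℝ (Fin 4)) i) =
          ![0, lam I 0, lam I 1, lam I 2] i •
            ((![q, WithLp.toLp 2 (S1 *ᵥ q), WithLp.toLp 2 (S2 *ᵥ q), WithLp.toLp 2 (S3 *ᵥ q)] : Fin 4 → EuclideanSpace ℝ (Fin 4)) i)) :=
  stmt8_general I q
end
end

section
/- For every q ∈ ℝ⁴, every Γ ∈ ℝ and every t ∈ ℝ, the determinant of the matrix exponential satisfies det(exp(−Γ·t·J(q))) = exp(−Γ·t·‖q‖²); in particular det(exp(−Γ·t·J(q))) = exp(−Γ·t) when ‖q‖ = 1. -/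
noncomputable section
open Matrix
open scoped InnerProductSpace BigOperators

/-!
`J(q)` is a real symmetric matrix, so diagonalizing it orthogonally gives
`det (exp (c J(q))) = exp (c tr J(q))`. Each `Sₗ` is orthogonal, hence
`tr ((Sₗ q)(Sₗ q)ᵀ) = ‖Sₗ q‖² = ‖q‖²`, and `tr J(q)` is a weighted average of these three equal
numbers.
-/

theorem Matrix.IsHermitian.det_exp {n : Type*} [Fintype n] [DecidableEq n]
    {A : Matrix n n ℝ} (hA : A.IsHermitian) :
    (NormedSpace.exp A).det = Real.exp A.trace := by
  set U : Matrix n n ℝ := (hA.eigenvectorUnitary : Matrix n n ℝ)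
  have hUU : star U * U = 1 := Unitary.star_mul_self_of_mem hA.eigenvectorUnitary.2
  have hU : IsUnit U := IsUnit.of_mul_eq_one_right _ hUU
  conv_lhs => rw [hA.spectral_theorem, Unitary.conjStarAlgAut_apply, ← inv_eq_left_inv hUU,
    exp_conj _ _ hU, det_conj hU, exp_diagonal, det_diagonal]
  rw [hA.trace_eq_sum_eigenvalues, Real.exp_sum]
  simp [← Real.exp_eq_exp_ℝ]

theorem Matrix.mulVec_dotProduct_mulVec_self {n R : Type*} [Fintype n] [DecidableEq n] [CommRing R]
    {A : Matrix n n R} (hA : Aᵀ * A = 1) (v : n → R) :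
    (A *ᵥ v) ⬝ᵥ (A *ᵥ v) = v ⬝ᵥ v := by
  rw [dotProduct_mulVec, ← mulVec_transpose, mulVec_mulVec, hA, one_mulVec]

theorem transpose_S_mul_S (l : Fin 3) : (S l)ᵀ * S l = 1 := by
  ext i j
  fin_cases l <;> fin_cases i <;> fin_cases j <;>
    simp [S, S1, S2, S3, mul_apply, Fin.sum_univ_four, one_apply]

theorem isHermitian_Jmat (I : Fin 3 → ℝ) (q : Fin 4 → ℝ) : (Jmat I q).IsHermitian := by
  simp [Jmat, IsSymm, transpose_sum, transpose_smul, transpose_vecMulVec]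

theorem trace_Jmat {I : Fin 3 → ℝ} (hI : ∑ l : Fin 3, 1 / I l ≠ 0) (q : Fin 4 → ℝ) :
    (Jmat I q).trace = q ⬝ᵥ q := by
  simp only [Jmat, trace_smul, trace_sum, trace_vecMulVec,
    mulVec_dotProduct_mulVec_self (transpose_S_mul_S _), smul_eq_mul, ← Finset.sum_mul]
  exact inv_mul_cancel_left₀ hI _

theorem det_exp_smul_Jmat {I : Fin 3 → ℝ} (hI : ∑ l : Fin 3, 1 / I l ≠ 0) (q : Fin 4 → ℝ)
    (c : ℝ) : (NormedSpace.exp (c • Jmat I q)).det = Real.exp (c * q ⬝ᵥ q) := by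
  rw [((isHermitian_Jmat I q).smul (IsSelfAdjoint.all c)).det_exp, trace_smul, trace_Jmat hI,
    smul_eq_mul]

/-- `det (exp (−Γ t J(q))) = exp (−Γ t ‖q‖²)`, and `= exp(−Γ t)` when `‖q‖ = 1`. -/
theorem stmt11 (I : Fin 3 → ℝ) (hI : ∀ l, 0 < I l) (q : EuclideanSpace ℝ (Fin 4)) (Γ t : ℝ) :
    (NormedSpace.exp ((-(Γ * t)) • Jmat I q)).det = Real.exp (-(Γ * t) * ‖q‖ ^ 2) ∧
    (‖q‖ = 1 → (NormedSpace.exp ((-(Γ * t)) • Jmat I q)).det = Real.exp (-(Γ * t))) := by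
  have hsum : ∑ l : Fin 3, 1 / I l ≠ 0 :=
    (Finset.sum_pos (fun l _ => one_div_pos.mpr (hI l)) Finset.univ_nonempty).ne'
  have hnorm : q.ofLp ⬝ᵥ q.ofLp = ‖q‖ ^ 2 := by
    rw [← real_inner_self_eq_norm_sq, EuclideanSpace.inner_eq_star_dotProduct]
    simp
  have hdet := det_exp_smul_Jmat hsum q (-(Γ * t))
  rw [hnorm] at hdet
  exact ⟨hdet, fun h1 => by rw [hdet, h1, one_pow, mul_one]⟩
end
end
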